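/- arXiv:2206.04428 — 3 statements merged into one kernel-verified Lean document; each statement's English description precedes it below -/
import Mathlib

section
/- Let M ≥ 1, λ_SR > 0, λ_RE > 0, η > 0, Ψ > 0, Φ > 0, γ_th > 0, ρ ∈ (0,1), and set ρ₁ = 1 − ρ. Fix x ≥ 0. Let X be the maximum of M i.i.d. exponential(λ_SR) random variables and let Z be exponential(λ_RE), independent of X. Then P( η ρ ρ₁ Ψ X Z / (η ρ Z + ρ₁ Φ x + ρ₁) < γ_th ) = 1 + Σ_{b=1}^{M} (−1)^b C(M,b) exp(−b λ_SR γ_th/(ρ₁ Ψ)) · λ_RE ∫₀^∞ exp(−b λ_SR γ_th (Φ x + 1)/(η ρ Ψ z) − λ_RE z) dz. -/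
/-!
Conditioned on `Z = z > 0`, the event is `max X < T(z)` with `λ_SR T(z) = a + c / z`, where
`a = λ_SR γ_th / (ρ₁ Ψ)` and `c = λ_SR γ_th (Φ x + 1) / (η ρ Ψ)`; by independence of the `X m`
this has probability `(1 - e^{-(a + c/z)})^M`. Since `max X` is independent of `Z`, the
probability is the average of this over the exponential law of `Z`. Expanding the power
binomially and integrating term by term gives the sum, the `b = 0` term contributing the total
mass `1`.
-/

open MeasureTheory ProbabilityTheory Real Finset

lemma preimage_prodMk_setOf_mul_mul_div_lt {k z γ : ℝ} {D : ℝ → ℝ} (hk : 0 < k)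
    (hz : 0 < z) (hD : 0 < D z) :
    (fun u => (u, z)) ⁻¹' {p : ℝ × ℝ | k * p.1 * p.2 / D p.2 < γ} =
      Set.Iio (γ * D z / (k * z)) := by
  ext u
  simp only [Set.mem_preimage, Set.mem_ofPred_eq, Set.mem_Iio]
  rw [div_lt_iff₀ hD, lt_div_iff₀ (by positivity), mul_assoc, mul_left_comm u]

lemma iSup_lt_iff_of_finite {ι : Type*} [Finite ι] [Nonempty ι] {f : ι → ℝ} {t : ℝ} :
    ⨆ i, f i < t ↔ ∀ i, f i < t := by
  refine ⟨fun h i => (le_ciSup (Set.finite_range f).bddAbove i).trans_lt h, fun h => ?_⟩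
  obtain ⟨i, hi⟩ := exists_eq_ciSup_of_finite (f := f)
  exact hi ▸ h i

lemma expMeasure_Iio {r : ℝ} (hr : 0 < r) {t : ℝ} (ht : 0 ≤ t) :
    expMeasure r (Set.Iio t) = ENNReal.ofReal (1 - exp (-(r * t))) := by
  change volume.withDensity (exponentialPDF r) (Set.Iio t) = _
  rw [withDensity_apply _ measurableSet_Iio, setLIntegral_congr Iio_ae_eq_Iic,
    lintegral_exponentialPDF_eq_antiDeriv hr t, if_pos ht]

lemma lintegral_expMeasure (r : ℝ) {f : ℝ → ENNReal} (hf : Measurable f) :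
    ∫⁻ z, f z ∂expMeasure r =
      ∫⁻ z in Set.Ioi 0, ENNReal.ofReal (r * exp (-(r * z))) * f z := by
  have hpdf : Measurable (exponentialPDF r) := (measurable_exponentialPDFReal r).ennreal_ofReal
  change ∫⁻ z, f z ∂volume.withDensity (exponentialPDF r) = _
  rw [lintegral_withDensity_eq_lintegral_mul _ hpdf hf,
    ← setLIntegral_eq_of_support_subset (s := Set.Ici 0), setLIntegral_congr Ioi_ae_eq_Ici.symm]
  · refine setLIntegral_congr_fun measurableSet_Ioi fun z hz => ?_
    simp [exponentialPDF_of_nonneg (le_of_lt hz)]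
  · intro z hz
    by_contra h
    exact hz (by simp [exponentialPDF_of_neg (not_le.mp h)])

lemma integrableOn_exp_neg_div_sub_mul_Ioi {c r : ℝ} (hc : 0 ≤ c) (hr : 0 < r) :
    IntegrableOn (fun z => exp (-(c / z) - r * z)) (Set.Ioi 0) := by
  refine (exp_neg_integrableOn_Ioi 0 hr).mono' (by fun_prop) ?_
  filter_upwards [ae_restrict_mem measurableSet_Ioi] with z hz
  rw [Real.norm_eq_abs, Real.abs_exp, neg_mul]
  gcongr
  have : 0 ≤ c / z := div_nonneg hc (le_of_lt hz)
  linarith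

lemma integral_exp_neg_mul_Ioi_zero {r : ℝ} (hr : 0 < r) :
    ∫ z in Set.Ioi 0, exp (-(r * z)) = r⁻¹ := by
  simpa [neg_mul] using integral_exp_mul_Ioi (neg_neg_of_pos hr) 0

lemma integral_mul_exp_mul_one_sub_exp_pow {r c : ℝ} (hr : 0 < r) (hc : 0 ≤ c) (a : ℝ)
    (M : ℕ) :
    ∫ z in Set.Ioi 0, r * exp (-(r * z)) * (1 - exp (-(a + c / z))) ^ M =
      1 + ∑ b ∈ Icc 1 M, (-1) ^ b * (M.choose b : ℝ) * exp (-(b * a)) *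
        (r * ∫ z in Set.Ioi 0, exp (-(b * c / z) - r * z)) := by
  have hexpand : ∀ z, r * exp (-(r * z)) * (1 - exp (-(a + c / z))) ^ M =
      ∑ b ∈ range (M + 1), (-1) ^ b * (M.choose b : ℝ) * exp (-(b * a)) *
        (r * exp (-(b * c / z) - r * z)) := by
    intro z
    rw [sub_eq_neg_add, add_pow, mul_sum]
    refine sum_congr rfl fun b _ => ?_
    rw [one_pow, mul_one, neg_pow, ← exp_nat_mul, mul_neg]
    have : exp (-(b * a)) * exp (-(b * c / z) - r * z) =
        exp (-(r * z)) * exp (-(b * (a + c / z))) := by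
      rw [← exp_add, ← exp_add]
      ring_nf
    linear_combination -((-1) ^ b * (M.choose b : ℝ) * r) * this
  have hintegrable : ∀ b : ℕ, IntegrableOn (fun z => exp (-(b * c / z) - r * z)) (Set.Ioi 0) :=
    fun b => integrableOn_exp_neg_div_sub_mul_Ioi (by positivity) hr
  simp_rw [hexpand]
  rw [integral_finsetSum _ fun b _ => ((hintegrable b).const_mul r).const_mul _]
  simp_rw [integral_const_mul]
  rw [range_eq_Ico, sum_eq_sum_Ico_succ_bot M.succ_pos, Nat.succ_eq_add_one, zero_add,
    Ico_add_one_right_eq_Icc]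
  congr 1
  simp [integral_exp_neg_mul_Ioi_zero hr, hr.ne']

namespace ProbabilityTheory

lemma iIndepFun.indepFun_comp_sumElim {Ω ι β γ : Type*} [MeasurableSpace Ω]
    [MeasurableSpace β] [MeasurableSpace γ] {P : Measure Ω} [Fintype ι] {X : ι → Ω → β}
    {Z : Ω → β}
    (h : iIndepFun (Sum.elim X fun _ : Unit => Z) P) (hX : ∀ i, Measurable (X i))
    (hZ : Measurable Z) {g : (ι → β) → γ} (hg : Measurable g) :
    IndepFun (fun ω => g fun i => X i ω) Z P := by
  classical
  have hmeas : ∀ j, Measurable (Sum.elim X (fun _ : Unit => Z) j) := by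
    rintro (i | u)
    exacts [hX i, hZ]
  have hdisj : Disjoint (univ.image Sum.inl) ({Sum.inr ()} : Finset (ι ⊕ Unit)) := by simp
  have hφ : Measurable fun v : ↥(univ.image (Sum.inl : ι → ι ⊕ Unit)) → β =>
      g fun i => v ⟨Sum.inl i, by simp⟩ :=
    hg.comp (measurable_pi_lambda _ fun i => measurable_pi_apply _)
  have hψ : Measurable fun v : ↥({Sum.inr ()} : Finset (ι ⊕ Unit)) → β =>
      v ⟨Sum.inr (), by simp⟩ :=
    measurable_pi_apply _
  exact (h.indepFun_finset _ _ hdisj hmeas).comp hφ hψ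

lemma iIndepFun.measure_iSup_lt {Ω ι : Type*} [MeasurableSpace Ω] {P : Measure Ω}
    [Fintype ι] [Nonempty ι] {X : ι → Ω → ℝ} (hX : iIndepFun X P) (t : ℝ) :
    P {ω | ⨆ i, X i ω < t} = ∏ i, P (X i ⁻¹' Set.Iio t) := by
  simp_rw [iSup_lt_iff_of_finite, Set.ofPred_forall]
  exact hX.meas_iInter fun i => ⟨Set.Iio t, measurableSet_Iio, rfl⟩

lemma IndepFun.measure_preimage_prodMk {Ω α β : Type*} [MeasurableSpace Ω] [MeasurableSpace α]
    [MeasurableSpace β] {P : Measure Ω} [IsFiniteMeasure P] {X : Ω → α} {Y : Ω → β}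
    (hXY : IndepFun X Y P) (hX : Measurable X) (hY : Measurable Y) {E : Set (α × β)}
    (hE : MeasurableSet E) :
    P ((fun ω => (X ω, Y ω)) ⁻¹' E) =
      ∫⁻ y, P.map X ((fun x => (x, y)) ⁻¹' E) ∂P.map Y := by
  rw [← Measure.map_apply (hX.prodMk hY) hE,
    (indepFun_iff_map_prod_eq_prod_map_map hX.aemeasurable hY.aemeasurable).mp hXY,
    Measure.prod_apply_symm hE]

lemma IndepFun.toReal_measure_preimage_prodMk_of_map_eq_expMeasure
    {Ω α : Type*} [MeasurableSpace Ω] [MeasurableSpace α] {P : Measure Ω} [IsFiniteMeasure P]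
    {S : Ω → α} {Z : Ω → ℝ} (hSZ : IndepFun S Z P) (hS : Measurable S) (hZ : Measurable Z)
    {r : ℝ} (hr : 0 ≤ r) (hlawZ : P.map Z = expMeasure r) {E : Set (α × ℝ)}
    (hE : MeasurableSet E) {g : ℝ → ℝ} (hg : Measurable g)
    (hg0 : ∀ z ∈ Set.Ioi (0 : ℝ), 0 ≤ g z)
    (hslice : ∀ z ∈ Set.Ioi (0 : ℝ),
      P.map S ((fun u => (u, z)) ⁻¹' E) = ENNReal.ofReal (g z)) :
    (P ((fun ω => (S ω, Z ω)) ⁻¹' E)).toReal =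
      ∫ z in Set.Ioi 0, r * exp (-(r * z)) * g z := by
  have hnonneg : 0 ≤ᵐ[volume.restrict (Set.Ioi 0)] fun z => r * exp (-(r * z)) * g z :=
    (ae_restrict_iff' measurableSet_Ioi).2 (ae_of_all _ fun z hz => by
      have := hg0 z hz
      positivity)
  rw [integral_eq_lintegral_of_nonneg_ae hnonneg (by fun_prop),
    hSZ.measure_preimage_prodMk hS hZ hE, hlawZ,
    lintegral_expMeasure r (measurable_measure_prodMk_right hE)]
  refine congrArg _ (setLIntegral_congr_fun measurableSet_Ioi fun z hz => ?_)
  rw [hslice z hz, ← ENNReal.ofReal_mul (by positivity)]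

lemma map_iSup_Iio_of_iIndepFun_expMeasure {Ω ι : Type*} [MeasurableSpace Ω] {P : Measure Ω}
    [Fintype ι] [Nonempty ι] {X : ι → Ω → ℝ} (hX : ∀ i, Measurable (X i))
    (hind : iIndepFun X P) {r : ℝ} (hr : 0 < r) (hlaw : ∀ i, P.map (X i) = expMeasure r) {t : ℝ}
    (ht : 0 ≤ t) :
    P.map (fun ω => ⨆ i, X i ω) (Set.Iio t) =
      ENNReal.ofReal (1 - exp (-(r * t))) ^ Fintype.card ι := by
  rw [Measure.map_apply (Measurable.iSup hX) measurableSet_Iio]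
  refine (hind.measure_iSup_lt t).trans ?_
  simp_rw [← Measure.map_apply (hX _) measurableSet_Iio, hlaw, expMeasure_Iio hr ht, prod_const,
    card_univ]

end ProbabilityTheory

/-- The conditional non-intercept probability `Q₂(x)` of the eavesdropper's relaying-phase SNR
in the SPSR scheme (Appendix B, before the Bessel-function evaluation). `X` is the maximum of
`M` i.i.d. exponential(λ_SR) gains, `Z` exponential(λ_RE) independent of `X`, `ρ₁ = 1-ρ`, and
`x ≥ 0` the conditioned aggregate jammer-to-eavesdropper gain. -/
theorem statement_8 {Ω : Type*} [MeasurableSpace Ω] (P : Measure Ω) [IsProbabilityMeasure P]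
    (M : ℕ) (hM : 1 ≤ M) (lamSR lamRE η Ψ Φ γth ρ : ℝ)
    (hSR : 0 < lamSR) (hRE : 0 < lamRE) (hη : 0 < η) (hΨ : 0 < Ψ) (hΦ : 0 < Φ) (hγ : 0 < γth)
    (hρ : ρ ∈ Set.Ioo (0 : ℝ) 1) (ρ₁ : ℝ) (hρ₁ : ρ₁ = 1 - ρ)
    (x : ℝ) (hx : 0 ≤ x)
    (X : Fin M → Ω → ℝ) (Z : Ω → ℝ)
    (hmeasX : ∀ m, Measurable (X m)) (hmeasZ : Measurable Z)
    (hindep : iIndepFun (Sum.elim X fun _ : Unit => Z) P)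
    (hlawX : ∀ m, P.map (X m) = expMeasure lamSR)
    (hlawZ : P.map Z = expMeasure lamRE) :
    (P {ω | η * ρ * ρ₁ * Ψ * (⨆ m, X m ω) * Z ω /
        (η * ρ * Z ω + ρ₁ * Φ * x + ρ₁) < γth}).toReal =
      1 + ∑ b ∈ Finset.Icc 1 M, (-1 : ℝ) ^ b * (M.choose b : ℝ) *
        Real.exp (-(b : ℝ) * lamSR * γth / (ρ₁ * Ψ)) *
        (lamRE * ∫ z in Set.Ioi (0 : ℝ),
          Real.exp (-(b : ℝ) * lamSR * γth * (Φ * x + 1) / (η * ρ * Ψ * z) - lamRE * z)) := by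
  obtain ⟨hρ0, hρ1⟩ := hρ
  have hρ₁0 : 0 < ρ₁ := by linarith
  have : Nonempty (Fin M) := ⟨⟨0, hM⟩⟩
  have hXind : iIndepFun X P := hindep.precomp (g := Sum.inl) Sum.inl_injective
  have hSZ : IndepFun (fun ω => ⨆ m, X m ω) Z P :=
    hindep.indepFun_comp_sumElim hmeasX hmeasZ (Measurable.iSup measurable_pi_apply)
  set a := lamSR * γth / (ρ₁ * Ψ)
  set c := lamSR * γth * (Φ * x + 1) / (η * ρ * Ψ)
  have hc : 0 ≤ c := by positivity
  have hF : ∀ z ∈ Set.Ioi (0 : ℝ), 0 ≤ 1 - exp (-(a + c / z)) := fun z (hz : 0 < z) =>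
    sub_nonneg.2 (exp_le_one_iff.2 (neg_nonpos.2 (by positivity)))
  have hslice : ∀ z ∈ Set.Ioi (0 : ℝ),
      P.map (fun ω => ⨆ m, X m ω) ((fun u => (u, z)) ⁻¹'
        {p | η * ρ * ρ₁ * Ψ * p.1 * p.2 / (η * ρ * p.2 + ρ₁ * Φ * x + ρ₁) < γth}) =
      ENNReal.ofReal ((1 - exp (-(a + c / z))) ^ M) := by
    intro z (hz : 0 < z)
    have hthreshold :
        lamSR * (γth * (η * ρ * z + ρ₁ * Φ * x + ρ₁) / (η * ρ * ρ₁ * Ψ * z)) = a + c / z := by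
      simp only [a, c]
      field_simp
      ring
    rw [preimage_prodMk_setOf_mul_mul_div_lt (D := fun w => η * ρ * w + ρ₁ * Φ * x + ρ₁)
        (by positivity) hz (by positivity),
      map_iSup_Iio_of_iIndepFun_expMeasure hmeasX hXind hSR hlawX (by positivity), hthreshold,
      Fintype.card_fin, ENNReal.ofReal_pow (hF z hz)]
  refine (hSZ.toReal_measure_preimage_prodMk_of_map_eq_expMeasure (Measurable.iSup hmeasX)
    hmeasZ hRE.le hlawZ (measurableSet_lt (by fun_prop) measurable_const) (by fun_prop)
    (fun z hz => pow_nonneg (hF z hz) M) hslice).trans ?_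
  rw [integral_mul_exp_mul_one_sub_exp_pow hRE hc]
  refine congrArg (1 + ·) (sum_congr rfl fun b _ => ?_)
  congr 3
  · simp only [a]
    ring
  · ext z
    congr 1
    simp only [c]
    ring
end

section
/- Let M ≥ 1, λ_SR > 0, λ_RD > 0, η > 0, Ψ > 0 and γ_th > 0. Let X be the maximum of M i.i.d. exponential(λ_SR) random variables and let Y be exponential(λ_RD), independent of X. Then P( η Ψ X Y / (1 + √(η Y))² < γ_th ) = 1 + Σ_{b=1}^{M} (−1)^b C(M,b) exp(−b λ_SR γ_th/Ψ) · λ_RD ∫₀^∞ exp( −2 b λ_SR γ_th/(Ψ √(η x)) − b λ_SR γ_th/(η Ψ x) − λ_RD x ) dx. -/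
/-!
Given `Y = y > 0`, the event `γ_D < γ_th` is `max_m X_m < τ(y)` with
`τ(y) = γ_th/Ψ + 2γ_th/(Ψ√(ηy)) + γ_th/(ηΨy)` (`snrThreshold`), and by independence its
probability is `(1 - exp(-λ_SR τ(y)))^M`. Integrating this against the density of `Y` and
expanding the power binomially gives the sum: the `b = 0` term is the total mass `1`, and the
constant part `γ_th/Ψ` of `τ` leaves each remaining integral as the factor `exp(-b λ_SR γ_th/Ψ)`.
-/

open MeasureTheory ProbabilityTheory Real Finset

open Set

lemma ciSup_lt_iff_of_finite {ι α : Type*} [ConditionallyCompleteLinearOrder α] [Finite ι]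
    [Nonempty ι] {f : ι → α} {a : α} : (⨆ i, f i) < a ↔ ∀ i, f i < a := by
  obtain ⟨j, hj⟩ := exists_eq_ciSup_of_finite (f := f)
  exact ⟨fun h i => (le_ciSup (Finite.bddAbove_range f) i).trans_lt h, fun h => hj ▸ h j⟩

lemma ProbabilityTheory.iIndepFun.measureReal_iSup_lt {Ω ι : Type*} [MeasurableSpace Ω]
    {P : Measure Ω} [Fintype ι] [Nonempty ι] {X : ι → Ω → ℝ} (hX : iIndepFun X P) (t : ℝ) :
    P.real ((fun ω => ⨆ i, X i ω) ⁻¹' Iio t) = ∏ i, P.real (X i ⁻¹' Iio t) := by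
  have hiInter : (fun ω => ⨆ i, X i ω) ⁻¹' Iio t = ⋂ i ∈ (univ : Finset ι), X i ⁻¹' Iio t := by
    ext; simp [ciSup_lt_iff_of_finite]
  rw [measureReal_def, hiInter, hX.measure_inter_preimage_eq_mul _ fun _ _ => measurableSet_Iio,
    ENNReal.toReal_prod]
  rfl

lemma expMeasure_eq_withDensity (r : ℝ) :
    expMeasure r = volume.withDensity (exponentialPDF r) := rfl

lemma expMeasure_real_Iio {r t : ℝ} (hr : 0 < r) (ht : 0 ≤ t) :
    (expMeasure r).real (Iio t) = 1 - exp (-(r * t)) := by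
  have := isProbabilityMeasure_expMeasure hr
  have : NullSingletonClass (expMeasure r) := by rw [expMeasure_eq_withDensity]; infer_instance
  rw [measureReal_congr Iio_ae_eq_Iic, ← cdf_eq_real, cdf_expMeasure_eq hr, if_pos ht]

lemma ProbabilityTheory.iIndepFun.measureReal_iSup_lt_of_expMeasure {Ω ι : Type*}
    [MeasurableSpace Ω] {P : Measure Ω} [Fintype ι] [Nonempty ι] {X : ι → Ω → ℝ}
    (hX : iIndepFun X P) (hmeas : ∀ i, Measurable (X i)) {r : ℝ} (hr : 0 < r)
    (hlaw : ∀ i, P.map (X i) = expMeasure r) {t : ℝ} (ht : 0 ≤ t) :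
    P.real ((fun ω => ⨆ i, X i ω) ⁻¹' Iio t) = (1 - exp (-(r * t))) ^ Fintype.card ι := by
  simp only [hX.measureReal_iSup_lt t, ← map_measureReal_apply (hmeas _) measurableSet_Iio, hlaw,
    expMeasure_real_Iio hr ht, prod_const, card_univ]

lemma integral_expMeasure {r : ℝ} (hr : 0 ≤ r) (f : ℝ → ℝ) :
    ∫ y, f y ∂expMeasure r = ∫ y in Ioi 0, r * exp (-(r * y)) * f y := by
  have hmeas : Measurable (exponentialPDF r) := (measurable_exponentialPDFReal r).ennreal_ofReal
  rw [expMeasure_eq_withDensity, integral_withDensity_eq_integral_toReal_smul hmeas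
    (ae_of_all _ fun _ => ENNReal.ofReal_lt_top),
    ← setIntegral_eq_integral_of_forall_compl_eq_zero (s := Ici 0), integral_Ici_eq_integral_Ioi]
  · refine setIntegral_congr_fun measurableSet_Ioi fun y hy => ?_
    rw [exponentialPDF_of_nonneg (le_of_lt hy), ENNReal.toReal_ofReal (by positivity), smul_eq_mul]
  · intro y hy
    rw [exponentialPDF_of_neg (not_le.mp hy), ENNReal.toReal_zero, zero_smul]

lemma ProbabilityTheory.IndepFun.measureReal_preimage_eq_integral {Ω β γ : Type*}
    [MeasurableSpace Ω] [MeasurableSpace β] [MeasurableSpace γ] {P : Measure Ω}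
    [IsFiniteMeasure P] {Y : Ω → β} {S : Ω → γ} (h : IndepFun Y S P) (hY : Measurable Y)
    (hS : Measurable S) {A : Set (β × γ)} (hA : MeasurableSet A) :
    P.real ((fun ω => (Y ω, S ω)) ⁻¹' A) = ∫ y, (P.map S).real (Prod.mk y ⁻¹' A) ∂P.map Y := by
  rw [measureReal_def, ← Measure.map_apply (hY.prodMk hS) hA,
    (indepFun_iff_map_prod_eq_prod_map_map hY.aemeasurable hS.aemeasurable).mp h,
    Measure.prod_apply hA, ← integral_toReal (measurable_measure_prodMk_left hA).aemeasurable
      (ae_of_all _ fun _ => measure_lt_top _ _)]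
  rfl

lemma ProbabilityTheory.iIndepFun.indepFun_comp_sumElim_s10 {Ω ι β γ : Type*} [MeasurableSpace Ω]
    [MeasurableSpace β] [MeasurableSpace γ] {P : Measure Ω} [Fintype ι] {X : ι → Ω → β}
    {Y : Ω → β} (h : iIndepFun (Sum.elim X fun _ : Unit => Y) P) (hX : ∀ i, Measurable (X i))
    (hY : Measurable Y) {φ : (ι → β) → γ} (hφ : Measurable φ) :
    IndepFun Y (fun ω => φ fun i => X i ω) P := by
  classical
  have hsplit := h.indepFun_finset {Sum.inr ()} (univ.image Sum.inl) (by simp)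
    (by rintro (i | u); exacts [hX i, hY])
  exact hsplit.comp (measurable_pi_apply ⟨Sum.inr (), by simp⟩)
    (hφ.comp (measurable_pi_lambda _ fun i => measurable_pi_apply ⟨Sum.inl i, by simp⟩))

lemma integrableOn_mul_exp_neg_mul_of_abs_le_one {r : ℝ} (hr : 0 < r) {g : ℝ → ℝ}
    (hg : AEStronglyMeasurable g (volume.restrict (Ioi 0))) (hg1 : ∀ y ∈ Ioi (0 : ℝ), |g y| ≤ 1) :
    IntegrableOn (fun y => r * exp (-(r * y)) * g y) (Ioi 0) := by
  have hexp : IntegrableOn (fun y => r * exp (-(r * y))) (Ioi 0) := by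
    have h := (exp_neg_integrableOn_Ioi 0 hr).const_mul r
    simp only [neg_mul] at h
    exact h
  exact hexp.mul_bdd hg (ae_restrict_of_forall_mem measurableSet_Ioi hg1)

lemma integral_mul_exp_neg_mul_one_sub_exp_neg_pow {r : ℝ} (hr : 0 < r) {φ : ℝ → ℝ}
    (hφ : Measurable φ) (hφ0 : ∀ y ∈ Ioi (0 : ℝ), 0 ≤ φ y) (M : ℕ) :
    ∫ y in Ioi 0, r * exp (-(r * y)) * (1 - exp (-φ y)) ^ M =
      1 + ∑ k ∈ Icc 1 M, (-1) ^ k * (M.choose k : ℝ) *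
        ∫ y in Ioi 0, r * exp (-(r * y)) * exp (-(k * φ y)) := by
  have hint : ∀ k : ℕ, IntegrableOn (fun y => r * exp (-(r * y)) * exp (-(k * φ y))) (Ioi 0) :=
    fun k => integrableOn_mul_exp_neg_mul_of_abs_le_one hr (by fun_prop) fun y hy => by
      rw [abs_of_pos (exp_pos _), exp_le_one_iff, neg_nonpos]
      exact mul_nonneg k.cast_nonneg (hφ0 y hy)
  have hbinom : ∀ y, r * exp (-(r * y)) * (1 - exp (-φ y)) ^ M = ∑ k ∈ range (M + 1),
      (-1) ^ k * (M.choose k : ℝ) * (r * exp (-(r * y)) * exp (-(k * φ y))) := fun y => by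
    rw [sub_eq_neg_add, add_pow, mul_sum]
    refine sum_congr rfl fun k _ => ?_
    rw [neg_pow, ← exp_nat_mul, one_pow, mul_one, mul_neg]
    ring
  have hmass : ∫ y in Ioi 0, r * exp (-(r * y)) = 1 := by
    have := isProbabilityMeasure_expMeasure hr
    simpa using (integral_expMeasure hr.le fun _ => 1).symm
  simp_rw [hbinom]
  rw [integral_finsetSum _ fun k _ => (hint k).const_mul _, range_eq_Ico,
    sum_eq_sum_Ico_succ_bot (by omega), zero_add, Finset.Ico_add_one_right_eq_Icc]
  simp only [integral_const_mul, CharP.cast_eq_zero, zero_mul, neg_zero, exp_zero, mul_one,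
    hmass, pow_zero, Nat.choose_zero_right, Nat.cast_one]

noncomputable def snrThreshold (η Ψ γ y : ℝ) : ℝ := γ / Ψ + 2 * γ / (Ψ * √(η * y)) + γ / (η * Ψ * y)

lemma snrThreshold_nonneg {η Ψ γ y : ℝ} (hη : 0 ≤ η) (hΨ : 0 ≤ Ψ) (hγ : 0 ≤ γ) (hy : 0 ≤ y) :
    0 ≤ snrThreshold η Ψ γ y := by
  unfold snrThreshold; positivity

lemma mul_div_one_add_sqrt_sq_lt_iff {η Ψ γ x y : ℝ} (hη : 0 < η) (hΨ : 0 < Ψ) (hy : 0 < y) :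
    η * Ψ * x * y / (1 + √(η * y)) ^ 2 < γ ↔ x < snrThreshold η Ψ γ y := by
  have hs : 0 < √(η * y) := sqrt_pos.mpr (by positivity)
  have hs2 : √(η * y) ^ 2 = η * y := sq_sqrt (by positivity)
  have hτ : snrThreshold η Ψ γ y = γ * (1 + √(η * y)) ^ 2 / (η * Ψ * y) := by
    unfold snrThreshold
    field_simp
    linear_combination (-(γ * (√(η * y) + 2))) * hs2
  rw [hτ, div_lt_iff₀ (by positivity), lt_div_iff₀ (by positivity)]
  constructor <;> intro h <;> linarith

lemma integral_mul_exp_neg_mul_one_sub_exp_neg_snrThreshold_pow {r a η Ψ γ : ℝ} (hr : 0 < r)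
    (ha : 0 ≤ a) (hη : 0 ≤ η) (hΨ : 0 ≤ Ψ) (hγ : 0 ≤ γ) (M : ℕ) :
    ∫ y in Ioi 0, r * exp (-(r * y)) * (1 - exp (-(a * snrThreshold η Ψ γ y))) ^ M =
      1 + ∑ b ∈ Icc 1 M, (-1 : ℝ) ^ b * (M.choose b : ℝ) * exp (-b * a * γ / Ψ) *
        (r * ∫ y in Ioi 0,
          exp (-2 * b * a * γ / (Ψ * √(η * y)) - b * a * γ / (η * Ψ * y) - r * y)) := by
  rw [integral_mul_exp_neg_mul_one_sub_exp_neg_pow hr (by unfold snrThreshold; fun_prop)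
    fun y hy => mul_nonneg ha (snrThreshold_nonneg hη hΨ hγ (le_of_lt hy))]
  congr 1
  refine sum_congr rfl fun b _ => ?_
  have hsplit : ∀ y, r * exp (-(r * y)) * exp (-(b * (a * snrThreshold η Ψ γ y))) =
      exp (-b * a * γ / Ψ) *
        (r * exp (-2 * b * a * γ / (Ψ * √(η * y)) - b * a * γ / (η * Ψ * y) - r * y)) :=
    fun y => by
      rw [mul_assoc, ← exp_add, mul_left_comm (exp _) r, ← exp_add, snrThreshold]
      ring_nf
  simp_rw [hsplit, integral_const_mul]
  ring

/-- Theorem 3 of the paper (exact integral form, Appendix C, eq. (34)): outage probability of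
the DPSR scheme, whose end-to-end SNR under the optimal splitting ratio `ρ* = 1/(1+√(ηY))` is
`ηΨXY/(1+√(ηY))²`. `X` is the maximum of `M` i.i.d. exponential(λ_SR) gains and `Y` is the
(independent) exponential(λ_RD) relay-to-destination gain. -/
theorem statement_10 {Ω : Type*} [MeasurableSpace Ω] (P : Measure Ω) [IsProbabilityMeasure P]
    (M : ℕ) (hM : 1 ≤ M) (lamSR lamRD η Ψ γth : ℝ)
    (hSR : 0 < lamSR) (hRD : 0 < lamRD) (hη : 0 < η) (hΨ : 0 < Ψ) (hγ : 0 < γth)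
    (X : Fin M → Ω → ℝ) (Y : Ω → ℝ)
    (hmeasX : ∀ m, Measurable (X m)) (hmeasY : Measurable Y)
    (hindep : iIndepFun (Sum.elim X fun _ : Unit => Y) P)
    (hlawX : ∀ m, P.map (X m) = expMeasure lamSR)
    (hlawY : P.map Y = expMeasure lamRD) :
    (P {ω | η * Ψ * (⨆ m, X m ω) * Y ω / (1 + Real.sqrt (η * Y ω)) ^ 2 < γth}).toReal =
      1 + ∑ b ∈ Finset.Icc 1 M, (-1 : ℝ) ^ b * (M.choose b : ℝ) *
        Real.exp (-(b : ℝ) * lamSR * γth / Ψ) *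
        (lamRD * ∫ x in Set.Ioi (0 : ℝ),
          Real.exp (-2 * (b : ℝ) * lamSR * γth / (Ψ * Real.sqrt (η * x))
            - (b : ℝ) * lamSR * γth / (η * Ψ * x) - lamRD * x)) := by
  have : Nonempty (Fin M) := ⟨⟨0, hM⟩⟩
  set A : Set (ℝ × ℝ) := {p | η * Ψ * p.2 * p.1 / (1 + √(η * p.1)) ^ 2 < γth}
  have hA : MeasurableSet A := measurableSet_lt (by fun_prop) measurable_const
  have hS : Measurable fun ω => ⨆ m, X m ω := Measurable.iSup hmeasX
  have hYS : IndepFun Y (fun ω => ⨆ m, X m ω) P :=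
    hindep.indepFun_comp_sumElim_s10 hmeasX hmeasY (Measurable.iSup fun m => measurable_pi_apply m)
  have hX : iIndepFun X P := hindep.precomp (g := Sum.inl) Sum.inl_injective
  calc _ = ∫ y, (P.map fun ω => ⨆ m, X m ω).real (Prod.mk y ⁻¹' A) ∂P.map Y :=
        hYS.measureReal_preimage_eq_integral hmeasY hS hA
    _ = ∫ y in Ioi 0,
          lamRD * exp (-(lamRD * y)) * (1 - exp (-(lamSR * snrThreshold η Ψ γth y))) ^ M := by
        rw [hlawY, integral_expMeasure hRD.le]
        refine setIntegral_congr_fun measurableSet_Ioi fun y hy => ?_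
        have hsection : Prod.mk y ⁻¹' A = Iio (snrThreshold η Ψ γth y) := by
          ext x; exact mul_div_one_add_sqrt_sq_lt_iff hη hΨ hy
        rw [hsection, map_measureReal_apply hS measurableSet_Iio,
          hX.measureReal_iSup_lt_of_expMeasure hmeasX hSR hlawX (snrThreshold_nonneg
            hη.le hΨ.le hγ.le (le_of_lt hy)), Fintype.card_fin]
    _ = _ := integral_mul_exp_neg_mul_one_sub_exp_neg_snrThreshold_pow hRD hSR.le hη.le hΨ.le
          hγ.le M
end

section
/- Let η > 0, Ψ > 0, a > 0 and c > 0, and define γ_D(ρ) = η ρ (1−ρ) Ψ a c / (η ρ c + (1−ρ)) for ρ ∈ (0,1). Then the derivative of γ_D vanishes at ρ ∈ (0,1) if and only if ρ = 1/(1 + √(ηc)); moreover the other stationary candidate 1/(1 − √(ηc)) never lies in (0,1). -/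
/-!
Writing `γ_D(ρ) = K ρ (1 - ρ) / (m ρ + 1 - ρ)` with `K = ηΨac` and `m = ηc`, the quotient rule
gives `γ_D'(ρ) = K ((1 - ρ)² - m ρ²) / (m ρ + 1 - ρ)²`. On `(0,1)` the numerator factors as
`K (1 - ρ - √m ρ) (1 - ρ + √m ρ)` with a positive second factor, so it vanishes exactly at
`ρ = 1/(1 + √m)`. The other root `1/(1 - √m)` is either `≤ 0` or, when positive, `≥ 1`
because `√m ≥ 0`.
-/

theorem hasDerivAt_mul_one_sub_div (K m ρ : ℝ) (hden : m * ρ + (1 - ρ) ≠ 0) :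
    HasDerivAt (fun ρ => K * ρ * (1 - ρ) / (m * ρ + (1 - ρ)))
      (K * ((1 - ρ) ^ 2 - m * ρ ^ 2) / (m * ρ + (1 - ρ)) ^ 2) ρ := by
  have hnum : HasDerivAt (fun ρ => K * ρ * (1 - ρ)) (K * (1 - 2 * ρ)) ρ := by
    refine (((hasDerivAt_id ρ).const_mul K).mul
      ((hasDerivAt_const ρ 1).sub (hasDerivAt_id ρ))).congr_deriv ?_
    simp only [Pi.sub_apply, id]; ring
  have hden' : HasDerivAt (fun ρ => m * ρ + (1 - ρ)) (m - 1) ρ := by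
    refine (((hasDerivAt_id ρ).const_mul m).add
      ((hasDerivAt_const ρ 1).sub (hasDerivAt_id ρ))).congr_deriv ?_
    ring
  refine (hnum.div hden' hden).congr_deriv ?_
  ring

theorem one_sub_sq_sub_mul_sq_eq_zero_iff {m ρ : ℝ} (hm : 0 ≤ m) (hρ : ρ ∈ Set.Ioo (0 : ℝ) 1) :
    (1 - ρ) ^ 2 - m * ρ ^ 2 = 0 ↔ ρ = 1 / (1 + √m) := by
  obtain ⟨hρ0, hρ1⟩ := hρ
  have hs : 0 ≤ √m := Real.sqrt_nonneg m
  have hfactor : (1 - ρ) ^ 2 - m * ρ ^ 2 = (1 - ρ - √m * ρ) * (1 - ρ + √m * ρ) := by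
    linear_combination ρ ^ 2 * Real.sq_sqrt hm
  have hpos : 0 < 1 - ρ + √m * ρ := by positivity
  rw [hfactor, mul_eq_zero, or_iff_left hpos.ne', eq_div_iff (by positivity)]
  constructor <;> intro h <;> linarith

theorem one_div_one_sub_sqrt_notMem_Ioo (x : ℝ) : 1 / (1 - √x) ∉ Set.Ioo (0 : ℝ) 1 := by
  rintro ⟨h0, h1⟩
  rw [div_lt_one (one_div_pos.mp h0)] at h1
  linarith [Real.sqrt_nonneg x]

/-- Stationarity analysis of `γ_D(ρ) = ηρ(1-ρ)Ψac/(ηρc + (1-ρ))` on `(0,1)`: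
the derivative vanishes at `ρ ∈ (0,1)` iff `ρ = 1/(1 + √(ηc))`, and the other stationary
candidate `1/(1 - √(ηc))` never lies in `(0,1)`. -/
theorem statement_15 (η Ψ a c : ℝ) (hη : 0 < η) (hΨ : 0 < Ψ) (ha : 0 < a) (hc : 0 < c) :
    (∀ ρ ∈ Set.Ioo (0 : ℝ) 1,
      (deriv (fun ρ => η * ρ * (1 - ρ) * Ψ * a * c / (η * ρ * c + (1 - ρ))) ρ = 0 ↔
        ρ = 1 / (1 + Real.sqrt (η * c)))) ∧
    1 / (1 - Real.sqrt (η * c)) ∉ Set.Ioo (0 : ℝ) 1 := by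
  refine ⟨fun ρ hρ => ?_, one_div_one_sub_sqrt_notMem_Ioo _⟩
  have hK : η * Ψ * a * c ≠ 0 := by positivity
  have hden : η * c * ρ + (1 - ρ) ≠ 0 := by
    have := hρ.1; have := sub_pos.mpr hρ.2; positivity
  have hγ : (fun ρ => η * ρ * (1 - ρ) * Ψ * a * c / (η * ρ * c + (1 - ρ))) =
      fun ρ => η * Ψ * a * c * ρ * (1 - ρ) / (η * c * ρ + (1 - ρ)) := by
    funext ρ; ring
  rw [hγ, (hasDerivAt_mul_one_sub_div _ _ ρ hden).deriv, div_eq_zero_iff,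
    or_iff_left (pow_ne_zero 2 hden), mul_eq_zero, or_iff_right hK]
  exact one_sub_sq_sub_mul_sq_eq_zero_iff (by positivity) hρ
end
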